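/- arXiv:1407.4942 — 2 statements merged into one kernel-verified Lean document; each statement's English description precedes it below -/
import Mathlib

section
/- The function g(z) = (log(1/(1-z)))^2 on the unit disk satisfies sup_{a∈D} (1-|a|^2)^{1-λ} ∫_D |g'(z)|^2 (1-|φ_a(z)|^2) dm(z) < ∞ for every 0<λ<1, where φ_a(z)=(a-z)/(1-ā z); hence g belongs to the analytic Morrey space L^{2,λ}. -/
open MeasureTheory Real Set Filter Topology

noncomputable section

/-- The open unit disk in ℂ. -/
def UD : Set ℂ := Metric.ball 0 1

/-- The Möbius map φ_a(z) = (a - z)/(1 - ā z). -/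
def moeb (a z : ℂ) : ℂ := (a - z) / (1 - (starRingEnd ℂ) a * z)

/-- The Morrey quantity (1-|a|²)^{1-λ} ∫_D |f'(z)|² (1-|φ_a(z)|²) dm(z),
with dm normalized area measure (1/π)·(Lebesgue measure). -/
def morreyInt (lam : ℝ) (f : ℂ → ℂ) (a : ℂ) : ℝ :=
  (1 - ‖a‖ ^ 2) ^ (1 - lam) *
    (π⁻¹ * ∫ z in UD, ‖deriv f z‖ ^ 2 * (1 - ‖moeb a z‖ ^ 2))

/-- g(z) = (log(1/(1-z)))². -/
def gfun (z : ℂ) : ℂ := (Complex.log (1 / (1 - z))) ^ 2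

/-! Both factors of the Morrey integrand are controlled by powers of `|1 - z|`, uniformly in `a`:
the weight satisfies `(1 - |a|²)^(1-λ) (1 - |φ_a z|²) ≤ 8 |1 - z|^(1-λ)`, and
`|g'(z)|² = 4 |log (1 - z)|² / |1 - z|² ≤ C_ε |1 - z|^(-2-ε)` for every `ε > 0`. With
`ε = (1 - λ)/2` the integrand is dominated by a multiple of `|1 - z|^(-(1 + λ + ε))`, which is
integrable on the disk since `1 + λ + ε < 2`. -/

open ComplexConjugate

lemma mem_UD_iff {z : ℂ} : z ∈ UD ↔ ‖z‖ < 1 := mem_ball_zero_iff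

lemma norm_one_sub_pos {z : ℂ} (hz : ‖z‖ < 1) : 0 < ‖1 - z‖ :=
  norm_pos_iff.mpr fun h => by simp [show z = 1 by linear_combination -h] at hz

section Moebius

variable {a z : ℂ}

lemma one_sub_norm_mul_le_norm_one_sub_conj_mul :
    1 - ‖a‖ * ‖z‖ ≤ ‖1 - conj a * z‖ := by
  simpa [Complex.norm_conj] using norm_sub_norm_le (1 : ℂ) (conj a * z)

lemma one_sub_norm_moeb_sq (h : 1 - conj a * z ≠ 0) :
    1 - ‖moeb a z‖ ^ 2 = (1 - ‖a‖ ^ 2) * (1 - ‖z‖ ^ 2) / ‖1 - conj a * z‖ ^ 2 := by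
  have hD : 0 < ‖1 - conj a * z‖ ^ 2 := by positivity
  rw [moeb, norm_div, div_pow, eq_div_iff hD.ne', sub_mul, div_mul_cancel₀ _ hD.ne']
  simp only [Complex.sq_norm, Complex.normSq_apply, Complex.sub_re, Complex.sub_im,
    Complex.mul_re, Complex.mul_im, Complex.one_re, Complex.one_im, Complex.conj_re,
    Complex.conj_im]
  ring

lemma one_sub_conj_mul_ne_zero (ha : ‖a‖ < 1) (hz : ‖z‖ < 1) : 1 - conj a * z ≠ 0 := by
  refine norm_pos_iff.mp (lt_of_lt_of_le ?_ one_sub_norm_mul_le_norm_one_sub_conj_mul)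
  nlinarith [norm_nonneg a, norm_nonneg z]

lemma one_sub_norm_moeb_sq_nonneg (ha : ‖a‖ < 1) (hz : ‖z‖ < 1) :
    0 ≤ 1 - ‖moeb a z‖ ^ 2 := by
  rw [one_sub_norm_moeb_sq (one_sub_conj_mul_ne_zero ha hz)]
  have : 0 ≤ 1 - ‖a‖ ^ 2 := by nlinarith [norm_nonneg a]
  have : 0 ≤ 1 - ‖z‖ ^ 2 := by nlinarith [norm_nonneg z]
  positivity

/-- With `A = 1 - |a|²`, `D = |1 - ā z|` and `t = 1 - |z|` one has `A ≤ 2D`, `1 - |z|² ≤ 2t` and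
`t ≤ D`, so `A^s (1 - |φ_a z|²) ≤ 4 (2D)^s t / D ≤ 8 t^s ≤ 8 |1 - z|^s`. -/
lemma rpow_mul_one_sub_norm_moeb_sq_le (ha : ‖a‖ < 1) (hz : ‖z‖ < 1) {s : ℝ} (hs0 : 0 ≤ s)
    (hs1 : s ≤ 1) :
    (1 - ‖a‖ ^ 2) ^ s * (1 - ‖moeb a z‖ ^ 2) ≤ 8 * ‖1 - z‖ ^ s := by
  set A := 1 - ‖a‖ ^ 2
  set D := ‖1 - conj a * z‖
  set t := 1 - ‖z‖
  have hDlow := one_sub_norm_mul_le_norm_one_sub_conj_mul (a := a) (z := z)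
  have hA0 : 0 ≤ A := by nlinarith [norm_nonneg a]
  have ht0 : 0 < t := by linarith
  have hAD : A ≤ 2 * D := by nlinarith [norm_nonneg a, norm_nonneg z]
  have htD : t ≤ D := by nlinarith [norm_nonneg a, norm_nonneg z]
  have hD0 : 0 < D := ht0.trans_le htD
  have hB0 : 0 ≤ 1 - ‖z‖ ^ 2 := by nlinarith [norm_nonneg z]
  have hB : 1 - ‖z‖ ^ 2 ≤ 2 * t := by nlinarith [norm_nonneg z]
  have htz : t ≤ ‖1 - z‖ := by
    have := norm_sub_norm_le (1 : ℂ) z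
    rw [norm_one] at this
    linarith
  have hDt : D ^ s / D ≤ t ^ s / t := by
    rw [← Real.rpow_sub_one hD0.ne', ← Real.rpow_sub_one ht0.ne']
    exact Real.rpow_le_rpow_of_nonpos ht0 htD (by linarith)
  have hpow2 : (2 : ℝ) ^ s ≤ 2 := by
    simpa using Real.rpow_le_rpow_of_exponent_le one_le_two hs1
  rw [one_sub_norm_moeb_sq (one_sub_conj_mul_ne_zero ha hz)]
  calc A ^ s * (A * (1 - ‖z‖ ^ 2) / D ^ 2)
      ≤ (2 * D) ^ s * (2 * D * (2 * t) / D ^ 2) := by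
        gcongr
    _ = 4 * 2 ^ s * (D ^ s / D) * t := by
        rw [Real.mul_rpow zero_le_two hD0.le]
        field_simp
        norm_num
    _ ≤ 4 * 2 * (t ^ s / t) * t := by gcongr
    _ = 8 * t ^ s := by field_simp; ring
    _ ≤ 8 * ‖1 - z‖ ^ s := by gcongr

end Moebius

lemma log_sq_le_of_le_one {ε t : ℝ} (hε : 0 < ε) (ht0 : 0 < t) (ht1 : t ≤ 1) :
    log t ^ 2 ≤ (2 / ε) ^ 2 * t ^ (-ε) := by
  have h := abs_log_mul_self_rpow_lt t (ε / 2) ht0 ht1 (by positivity)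
  rw [one_div_div] at h
  have hsq : (log t * t ^ (ε / 2)) ^ 2 ≤ (2 / ε) ^ 2 :=
    sq_le_sq' (abs_lt.mp h).1.le (abs_lt.mp h).2.le
  have hsplit : (log t * t ^ (ε / 2)) ^ 2 * t ^ (-ε) = log t ^ 2 := by
    rw [mul_pow, ← Real.rpow_mul_natCast ht0.le, mul_assoc, ← Real.rpow_add ht0]
    norm_num
  rw [← hsplit]
  gcongr

lemma exists_log_sq_add_pi_sq_le {ε : ℝ} (hε : 0 < ε) :
    ∃ C, ∀ t, 0 < t → t ≤ 2 → log t ^ 2 + π ^ 2 ≤ C * t ^ (-ε) := by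
  refine ⟨(2 / ε) ^ 2 + (1 + π ^ 2) * 2 ^ ε, fun t ht0 ht2 => ?_⟩
  have hscale : 1 ≤ 2 ^ ε * t ^ (-ε) := by
    rw [Real.rpow_neg ht0.le, ← div_eq_mul_inv, one_le_div (by positivity)]
    exact Real.rpow_le_rpow ht0.le ht2 hε.le
  have hconst : 1 + π ^ 2 ≤ (1 + π ^ 2) * (2 ^ ε * t ^ (-ε)) :=
    le_mul_of_one_le_right (by positivity) hscale
  rw [add_mul, mul_assoc]
  rcases le_total t 1 with ht1 | ht1
  · linarith [log_sq_le_of_le_one hε ht0 ht1]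
  · have hlog : log t ≤ 1 := by linarith [Real.log_le_sub_one_of_pos ht0]
    have : log t ^ 2 ≤ 1 := by nlinarith [Real.log_nonneg ht1]
    have : 0 ≤ (2 / ε) ^ 2 * t ^ (-ε) := by positivity
    linarith

lemma Complex.sq_norm_log_le (w : ℂ) :
    ‖Complex.log w‖ ^ 2 ≤ Real.log ‖w‖ ^ 2 + π ^ 2 := by
  have harg : Complex.arg w ^ 2 ≤ π ^ 2 :=
    sq_le_sq' (by linarith [Complex.neg_pi_lt_arg w]) (Complex.arg_le_pi w)
  rw [Complex.sq_norm, Complex.normSq_apply, Complex.log_re, Complex.log_im]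
  nlinarith

lemma hasDerivAt_gfun {z : ℂ} (hz : 0 < (1 - z).re) :
    HasDerivAt gfun (2 * Complex.log (1 / (1 - z)) * (1 - z)⁻¹) z := by
  have hne : 1 - z ≠ 0 := fun h => by simp [h] at hz
  have hslit : 1 / (1 - z) ∈ Complex.slitPlane := by
    left
    rw [one_div, Complex.inv_re]
    exact div_pos hz (Complex.normSq_pos.mpr hne)
  have hinv : HasDerivAt (fun w : ℂ => 1 / (1 - w)) (1 / (1 - z) ^ 2) z := by
    simpa [one_div] using ((hasDerivAt_id z).const_sub 1).fun_inv hne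
  refine ((hinv.clog hslit).fun_pow 2).congr_deriv ?_
  field_simp
  ring

lemma exists_sq_norm_deriv_gfun_le {ε : ℝ} (hε : 0 < ε) :
    ∃ C, ∀ z ∈ UD, ‖deriv gfun z‖ ^ 2 ≤ C * ‖1 - z‖ ^ (-(2 + ε)) := by
  obtain ⟨C, hC⟩ := exists_log_sq_add_pi_sq_le hε
  refine ⟨4 * C, fun z hz => ?_⟩
  rw [mem_UD_iff] at hz
  have hre : 0 < (1 - z).re := by
    simpa using (Complex.re_le_norm z).trans_lt hz
  have hw0 := norm_one_sub_pos hz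
  have hw2 : ‖1 - z‖ ≤ 2 := (norm_sub_le _ _).trans (by rw [norm_one]; linarith)
  have hlog : ‖Complex.log (1 / (1 - z))‖ ^ 2 ≤ C * ‖1 - z‖ ^ (-ε) := by
    have := Complex.sq_norm_log_le (1 / (1 - z))
    rw [norm_div, norm_one, one_div ‖1 - z‖, Real.log_inv, neg_sq] at this
    exact this.trans (hC _ hw0 hw2)
  rw [(hasDerivAt_gfun hre).deriv, norm_mul, norm_mul, norm_inv, Complex.norm_two]
  calc (2 * ‖Complex.log (1 / (1 - z))‖ * ‖1 - z‖⁻¹) ^ 2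
      = 4 * ‖Complex.log (1 / (1 - z))‖ ^ 2 * (‖1 - z‖ ^ 2)⁻¹ := by ring
    _ ≤ 4 * (C * ‖1 - z‖ ^ (-ε)) * (‖1 - z‖ ^ 2)⁻¹ := by gcongr
    _ = 4 * C * ‖1 - z‖ ^ (-(2 + ε)) := by
        rw [neg_add, Real.rpow_add hw0, Real.rpow_neg hw0.le 2, Real.rpow_two]
        ring

lemma integrableOn_UD_norm_one_sub_rpow_neg {p : ℝ} (hp : p < 2) :
    IntegrableOn (fun z : ℂ => ‖1 - z‖ ^ (-p)) UD := by
  have hball : IntegrableOn (fun w : ℂ => ‖w‖ ^ (-p)) (Metric.ball 0 2) := by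
    refine integrableOn_ball_of_norm_le_rpow (C := 1) (by simp) (by simpa using hp)
      (Eventually.of_forall fun w => ?_) (measurable_norm.pow_const _).aestronglyMeasurable
    rw [one_mul, Real.norm_of_nonneg (by positivity)]
  have hshift := (((volume : Measure ℂ).measurePreserving_sub_left 1).integrableOn_comp_preimage
    (MeasurableEquiv.subLeft (1 : ℂ)).measurableEmbedding).mpr hball
  refine hshift.mono_set fun z hz => ?_
  rw [mem_UD_iff] at hz
  simp only [mem_preimage, mem_ball_zero_iff]
  linarith [norm_sub_le (1 : ℂ) z, norm_one (α := ℂ)]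

lemma exists_morreyInt_le_of_sq_norm_deriv_le {lam p C : ℝ} {f : ℂ → ℂ} (hlam0 : 0 ≤ lam)
    (hlam1 : lam ≤ 1) (hp : p < 3 - lam)
    (hf : ∀ z ∈ UD, ‖deriv f z‖ ^ 2 ≤ C * ‖1 - z‖ ^ (-p)) :
    ∃ M, ∀ a ∈ UD, morreyInt lam f a ≤ M := by
  set q := p - (1 - lam)
  refine ⟨π⁻¹ * ∫ z in UD, 8 * C * ‖1 - z‖ ^ (-q), fun a ha => ?_⟩
  have hint := (integrableOn_UD_norm_one_sub_rpow_neg (p := q) (by linarith)).const_mul (8 * C)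
  have ha' := mem_UD_iff.mp ha
  have hA : 0 ≤ 1 - ‖a‖ ^ 2 := by nlinarith [norm_nonneg a]
  have hnonneg : ∀ z ∈ UD,
      0 ≤ (1 - ‖a‖ ^ 2) ^ (1 - lam) * (‖deriv f z‖ ^ 2 * (1 - ‖moeb a z‖ ^ 2)) := by
    intro z hz
    have := one_sub_norm_moeb_sq_nonneg ha' (mem_UD_iff.mp hz)
    positivity
  have hle : ∀ z ∈ UD, (1 - ‖a‖ ^ 2) ^ (1 - lam) * (‖deriv f z‖ ^ 2 * (1 - ‖moeb a z‖ ^ 2))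
      ≤ 8 * C * ‖1 - z‖ ^ (-q) := by
    intro z hz
    have hz' := mem_UD_iff.mp hz
    calc (1 - ‖a‖ ^ 2) ^ (1 - lam) * (‖deriv f z‖ ^ 2 * (1 - ‖moeb a z‖ ^ 2))
        = ‖deriv f z‖ ^ 2 * ((1 - ‖a‖ ^ 2) ^ (1 - lam) * (1 - ‖moeb a z‖ ^ 2)) := by ring
      _ ≤ C * ‖1 - z‖ ^ (-p) * (8 * ‖1 - z‖ ^ (1 - lam)) :=
          mul_le_mul (hf z hz) (rpow_mul_one_sub_norm_moeb_sq_le ha' hz' (by linarith)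
            (by linarith)) (mul_nonneg (Real.rpow_nonneg hA _)
            (one_sub_norm_moeb_sq_nonneg ha' hz')) ((sq_nonneg _).trans (hf z hz))
      _ = 8 * C * ‖1 - z‖ ^ (-q) := by
          rw [show -q = -p + (1 - lam) by ring, Real.rpow_add (norm_one_sub_pos hz')]
          ring
  rw [morreyInt, mul_left_comm, ← integral_const_mul]
  refine mul_le_mul_of_nonneg_left (integral_mono_of_nonneg ?_ hint ?_) (by positivity)
  · exact ae_restrict_of_forall_mem measurableSet_ball hnonneg
  · exact ae_restrict_of_forall_mem measurableSet_ball hle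

/-- for every 0 < λ < 1, the Morrey seminorm quantities of g are
uniformly bounded over a ∈ D, i.e. g ∈ L^{2,λ}. -/
theorem stmt0 (lam : ℝ) (h0 : 0 < lam) (h1 : lam < 1) :
    ∃ C : ℝ, ∀ a ∈ UD, morreyInt lam gfun a ≤ C := by
  obtain ⟨C, hC⟩ := exists_sq_norm_deriv_gfun_le (ε := (1 - lam) / 2) (by linarith)
  exact exists_morreyInt_le_of_sq_norm_deriv_le h0.le h1.le (by linarith) hC
end
end

section
/- Let 0<λ<1 and p>1, and let g be analytic on D with M(g) := sup_{I⊂∂D}((1/|I|^{p-λ+1})∫_{S(I)}|g'(z)|^2(1-|z|^2)^p dm(z))^{1/2} < ∞. Then for every arc I⊂∂D, ∫_{S(I)}|g'(z)|^2(1-|z|^2)^{p+λ-1} dm(z) ≤ C·M(g)^2·|I|^p, where C depends only on p and λ. -/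
/-!
Cut `S(I)`, `|I| = h`, into the layers where `h / 2 ^ (n + 1) < 1 - |z| ≤ h / 2 ^ n`. On the
`n`-th layer the weight `(1 - |z|²) ^ (λ - 1)` is at most `(h / 2 ^ (n + 1)) ^ (λ - 1)`, and the
layer is covered by `2 ^ n` Carleson boxes of side `h / 2 ^ n`, each carrying at most
`M² (h / 2 ^ n) ^ (p - λ + 1)` of the measure `|g'|² (1 - |z|²) ^ p dm`. The `n`-th layer thus
contributes at most `2 ^ (1 - λ) M² h ^ p 2 ^ (n (1 - p))`, a geometric series since `p > 1`.
-/

open MeasureTheory Real Set Filter Topology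

noncomputable section

/-- The Carleson box S(I) over the arc I of normalized length h centered at e^{iθ}:
S(I) = {z ∈ D : 1-h ≤ |z| < 1, z/|z| ∈ I}. -/
def carleson (θ h : ℝ) : Set ℂ :=
  {z : ℂ | 1 - h ≤ ‖z‖ ∧ ‖z‖ < 1 ∧
    |Complex.arg (z * Complex.exp (-((θ : ℂ) * Complex.I)))| ≤ π * h}

open scoped ENNReal

lemma Real.Angle.abs_toReal_coe_le (x : ℝ) : |(x : Real.Angle).toReal| ≤ |x| := by
  by_cases hx : |x| < π
  · rw [abs_lt] at hx
    rw [Real.Angle.toReal_coe_eq_self_iff.mpr ⟨hx.1, hx.2.le⟩]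
  · exact (Real.Angle.abs_toReal_le_pi _).trans (not_lt.mp hx)

lemma Complex.abs_arg_mul_exp_le (u : ℂ) (δ : ℝ) :
    |arg (u * exp (δ * I))| ≤ |arg u + δ| := by
  rcases eq_or_ne u 0 with rfl | hu
  · simp
  have hpolar : u * exp (δ * I) = ‖u‖ * exp ((arg u + δ : ℝ) * I) := by
    conv_lhs => rw [← norm_mul_exp_arg_mul_I u]
    push_cast
    rw [mul_assoc, ← exp_add]
    ring_nf
  rw [hpolar, arg_real_mul _ (norm_pos_iff.mpr hu), arg_exp_mul_I, ← Real.Angle.toReal_coe]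
  exact Real.Angle.abs_toReal_coe_le _

lemma measurableSet_carleson (θ h : ℝ) : MeasurableSet (carleson θ h) := by
  unfold carleson
  measurability

lemma mul_exp_neg_mul_I_eq (z : ℂ) (θ δ : ℝ) :
    z * Complex.exp (-((θ : ℂ) * Complex.I)) =
      z * Complex.exp (-(((θ + δ : ℝ) : ℂ) * Complex.I)) * Complex.exp (δ * Complex.I) := by
  rw [mul_assoc, ← Complex.exp_add]
  push_cast
  ring_nf

lemma mem_carleson_add {z : ℂ} {θ δ h : ℝ} (hz : 1 - h ≤ ‖z‖ ∧ ‖z‖ < 1)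
    (harg : |Complex.arg (z * Complex.exp (-((θ : ℂ) * Complex.I))) - δ| ≤ π * h) :
    z ∈ carleson (θ + δ) h := by
  refine ⟨hz.1, hz.2, ?_⟩
  rw [mul_exp_neg_mul_I_eq z (θ + δ) (-δ), add_neg_cancel_right]
  exact (Complex.abs_arg_mul_exp_le _ _).trans (by simpa [sub_eq_add_neg] using harg)

lemma carleson_subset_carleson {θ δ h h' : ℝ} (hδ : |δ| ≤ π * h - π * h') :
    carleson (θ + δ) h' ⊆ carleson θ h := by
  have hh' : h' ≤ h := by nlinarith [abs_nonneg δ, Real.pi_pos]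
  rintro z ⟨hz₁, hz₂, hz₃⟩
  refine ⟨by linarith, hz₂, ?_⟩
  rw [mul_exp_neg_mul_I_eq z θ δ]
  calc _ ≤ _ := Complex.abs_arg_mul_exp_le _ _
    _ ≤ _ := abs_add_le _ _
    _ ≤ π * h := by linarith

lemma exists_abs_sub_odd_mul_le {N : ℕ} (hN : 0 < N) {w a : ℝ} (hw : 0 < w)
    (ha : |a| ≤ N * w) : ∃ j < N, |a - (2 * j + 1 - N) * w| ≤ w := by
  set t := (a + N * w) / (2 * w) with ht
  have ht₀ : 0 ≤ t := div_nonneg (by linarith [neg_abs_le a]) (by positivity)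
  have htN : t ≤ N := by rw [div_le_iff₀ (by positivity)]; linarith [le_abs_self a]
  refine ⟨min ⌊t⌋₊ (N - 1), by omega, ?_⟩
  have hlow : ((min ⌊t⌋₊ (N - 1) : ℕ) : ℝ) ≤ t :=
    (Nat.cast_le.mpr (min_le_left _ _)).trans (Nat.floor_le ht₀)
  have hup : t ≤ ((min ⌊t⌋₊ (N - 1) : ℕ) : ℝ) + 1 := by
    rcases min_choice ⌊t⌋₊ (N - 1) with h | h <;> rw [h]
    · exact (Nat.lt_floor_add_one t).le
    · rw [Nat.cast_sub hN, Nat.cast_one]; linarith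
  have ha_eq : a = 2 * w * t - N * w := by rw [ht]; field_simp; ring
  rw [abs_le, ha_eq]
  constructor <;> nlinarith

/-- For `j < 2 ^ n` the arcs of these boxes tile the arc of `carleson θ h`. -/
def dyadicBox (θ h : ℝ) (n : ℕ) (j : Fin (2 ^ n)) : Set ℂ :=
  carleson (θ + (2 * (j : ℕ) + 1 - 2 ^ n) * (π * (h / 2 ^ n))) (h / 2 ^ n)

lemma dyadicBox_subset_carleson {θ h : ℝ} (hh : 0 ≤ h) (n : ℕ) (j : Fin (2 ^ n)) :
    dyadicBox θ h n j ⊆ carleson θ h := by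
  apply carleson_subset_carleson
  have hj : ((j : ℕ) : ℝ) + 1 ≤ 2 ^ n := by exact_mod_cast j.2
  have hw : 0 ≤ π * (h / 2 ^ n) := by positivity
  have hsum : (2 : ℝ) ^ n * (π * (h / 2 ^ n)) = π * h := by field_simp
  rw [abs_le]
  constructor <;> nlinarith [(j : ℕ).cast_nonneg (α := ℝ)]

lemma carleson_inter_subset_iUnion_dyadicBox {θ h : ℝ} (hh : 0 < h) (n : ℕ) :
    carleson θ h ∩ {z | 1 - h / 2 ^ n ≤ ‖z‖} ⊆ ⋃ j, dyadicBox θ h n j := by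
  rintro z ⟨⟨-, hz₁, hz₂⟩, hz₀⟩
  have hsum : (2 ^ n : ℕ) * (π * (h / 2 ^ n)) = π * h := by push_cast; field_simp
  obtain ⟨j, hj, hjz⟩ := exists_abs_sub_odd_mul_le (Nat.two_pow_pos n)
    (by positivity : 0 < π * (h / 2 ^ n)) (hz₂.trans hsum.ge)
  refine mem_iUnion.mpr ⟨⟨j, hj⟩, mem_carleson_add ⟨hz₀, hz₁⟩ ?_⟩
  simpa using hjz

lemma exists_mem_dyadic_annulus {h : ℝ} {z : ℂ} (hz : 1 - h ≤ ‖z‖) (hz₁ : ‖z‖ < 1) :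
    ∃ n : ℕ, 1 - h / 2 ^ n ≤ ‖z‖ ∧ ‖z‖ < 1 - h / 2 ^ (n + 1) := by
  have hd : 0 < 1 - ‖z‖ := by linarith
  have hx : 1 ≤ h / (1 - ‖z‖) := by rw [le_div_iff₀ hd]; linarith
  obtain ⟨n, hn, hn₁⟩ := exists_nat_pow_near hx one_lt_two
  rw [le_div_iff₀ hd] at hn
  rw [div_lt_iff₀ hd] at hn₁
  refine ⟨n, ?_, ?_⟩
  · rw [sub_le_comm, le_div_iff₀ (by positivity)]; linarith
  · rw [lt_sub_comm, div_lt_iff₀ (by positivity)]; linarith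

lemma one_sub_norm_sq_rpow_le {z : ℂ} {ε a : ℝ} (hε : 0 < ε) (hz : ‖z‖ < 1 - ε) (ha : a ≤ 0) :
    (1 - ‖z‖ ^ 2) ^ a ≤ ε ^ a := by
  refine Real.rpow_le_rpow_of_nonpos hε ?_ ha
  nlinarith [norm_nonneg z]

theorem lintegral_carleson_weight_le {f : ℂ → ℝ≥0∞} {lam K s θ h : ℝ} (hlam : lam ≤ 1)
    (hh : 0 < h)
    (hbox : ∀ n j, ∫⁻ z in dyadicBox θ h n j, f z ≤ ENNReal.ofReal (K * (h / 2 ^ n) ^ s)) :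
    ∫⁻ z in carleson θ h, ENNReal.ofReal ((1 - ‖z‖ ^ 2) ^ (lam - 1)) * f z ≤
      ∑' n : ℕ, ENNReal.ofReal (2 ^ n * (h / 2 ^ (n + 1)) ^ (lam - 1) * (K * (h / 2 ^ n) ^ s)) := by
  set A : ℕ → Set ℂ := fun n =>
    carleson θ h ∩ {z | 1 - h / 2 ^ n ≤ ‖z‖ ∧ ‖z‖ < 1 - h / 2 ^ (n + 1)}
  have hcover : carleson θ h ⊆ ⋃ n, A n := fun z hz =>
    mem_iUnion.mpr ((exists_mem_dyadic_annulus hz.1 hz.2.1).imp fun _ hn => ⟨hz, hn⟩)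
  have hA : ∀ n, MeasurableSet (A n) := fun n =>
    (measurableSet_carleson θ h).inter (by measurability)
  have hlayer : ∀ n, ∫⁻ z in A n, ENNReal.ofReal ((1 - ‖z‖ ^ 2) ^ (lam - 1)) * f z ≤
      ENNReal.ofReal (2 ^ n * (h / 2 ^ (n + 1)) ^ (lam - 1) * (K * (h / 2 ^ n) ^ s)) := by
    intro n
    set c := (h / 2 ^ (n + 1)) ^ (lam - 1)
    calc ∫⁻ z in A n, ENNReal.ofReal ((1 - ‖z‖ ^ 2) ^ (lam - 1)) * f z
        ≤ ∫⁻ z in A n, ENNReal.ofReal c * f z :=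
          setLIntegral_mono' (hA n) fun z hz => mul_le_mul_left
            (ENNReal.ofReal_le_ofReal
              (one_sub_norm_sq_rpow_le (by positivity) hz.2.2 (by linarith))) _
      _ = ENNReal.ofReal c * ∫⁻ z in A n, f z := lintegral_const_mul' _ _ ENNReal.ofReal_ne_top
      _ ≤ ENNReal.ofReal c * ∑' j, ∫⁻ z in dyadicBox θ h n j, f z := by
          gcongr
          refine (lintegral_mono_set ?_).trans (lintegral_iUnion_le _ _)
          exact fun z hz => carleson_inter_subset_iUnion_dyadicBox hh n ⟨hz.1, hz.2.1⟩
      _ ≤ ENNReal.ofReal c * ∑' _ : Fin (2 ^ n), ENNReal.ofReal (K * (h / 2 ^ n) ^ s) := by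
          gcongr with j
          exact hbox n j
      _ = _ := by
          rw [tsum_fintype, Finset.sum_const, Finset.card_univ, Fintype.card_fin, nsmul_eq_mul,
            ENNReal.ofReal_mul (by positivity : (0 : ℝ) ≤ 2 ^ n * c),
            ENNReal.ofReal_mul (by positivity : (0 : ℝ) ≤ 2 ^ n), ENNReal.ofReal_pow zero_le_two]
          norm_num
          ring
  calc _ ≤ ∫⁻ z in ⋃ n, A n, ENNReal.ofReal ((1 - ‖z‖ ^ 2) ^ (lam - 1)) * f z :=
        lintegral_mono_set hcover
    _ ≤ ∑' n, ∫⁻ z in A n, ENNReal.ofReal ((1 - ‖z‖ ^ 2) ^ (lam - 1)) * f z :=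
        lintegral_iUnion_le _ _
    _ ≤ _ := ENNReal.tsum_le_tsum hlayer

lemma dyadic_term_eq {h : ℝ} (hh : 0 < h) (lam p : ℝ) (n : ℕ) :
    2 ^ n * (h / 2 ^ (n + 1)) ^ (lam - 1) * (h / 2 ^ n) ^ (p - lam + 1) =
      2 ^ (1 - lam) * h ^ p * ((2 : ℝ) ^ (1 - p)) ^ n := by
  refine Real.log_injOn_pos (Set.mem_Ioi.2 (by positivity)) (Set.mem_Ioi.2 (by positivity)) ?_
  simp (disch := positivity) only [Real.log_mul, Real.log_rpow, Real.log_div, Real.log_pow]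
  push_cast
  ring

lemma two_rpow_one_sub_lt_one {p : ℝ} (hp : 1 < p) : (2 : ℝ) ^ (1 - p) < 1 :=
  Real.rpow_lt_one_of_one_lt_of_neg one_lt_two (by linarith)

lemma tsum_dyadic_term_eq {lam p K h : ℝ} (hp : 1 < p) (hK : 0 ≤ K) (hh : 0 < h) :
    ∑' n : ℕ, ENNReal.ofReal
        (2 ^ n * (h / 2 ^ (n + 1)) ^ (lam - 1) * (K * (h / 2 ^ n) ^ (p - lam + 1))) =
      ENNReal.ofReal (2 ^ (1 - lam) * (1 - 2 ^ (1 - p))⁻¹ * K * h ^ p) := by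
  have hr := two_rpow_one_sub_lt_one hp
  have hterm : ∀ n : ℕ, 2 ^ n * (h / 2 ^ (n + 1)) ^ (lam - 1) * (K * (h / 2 ^ n) ^ (p - lam + 1)) =
      K * 2 ^ (1 - lam) * h ^ p * ((2 : ℝ) ^ (1 - p)) ^ n := fun n => by
    rw [mul_left_comm, dyadic_term_eq hh]; ring
  simp_rw [hterm]
  rw [← ENNReal.ofReal_tsum_of_nonneg (fun n => by positivity)
      ((summable_geometric_of_lt_one (by positivity) hr).mul_left _),
    tsum_mul_left, tsum_geometric_of_lt_one (by positivity) hr]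
  ring_nf

lemma one_sub_norm_sq_pos {z : ℂ} (hz : ‖z‖ < 1) : 0 < 1 - ‖z‖ ^ 2 := by
  nlinarith [norm_nonneg z]

lemma one_sub_norm_sq_rpow_le_rpow {z : ℂ} (hz : ‖z‖ < 1) {a b : ℝ} (hab : a ≤ b) :
    (1 - ‖z‖ ^ 2) ^ b ≤ (1 - ‖z‖ ^ 2) ^ a :=
  Real.rpow_le_rpow_of_exponent_ge (one_sub_norm_sq_pos hz) (by nlinarith [norm_nonneg z]) hab

section WeightedCarlesonBound

variable {u : ℂ → ℝ} {M lam p θ h : ℝ}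

lemma lintegral_dyadicBox_le (hu₀ : ∀ z, 0 ≤ u z) (hu : Measurable u) (hlam : lam ≤ 1)
    (hh : h ∈ Ioc (0 : ℝ) 1)
    (hM : ∀ θ : ℝ, ∀ h ∈ Ioc (0 : ℝ) 1,
      π⁻¹ * (∫ z in carleson θ h, u z * (1 - ‖z‖ ^ 2) ^ p) ≤ M ^ 2 * h ^ (p - lam + 1))
    (hG : IntegrableOn (fun z => u z * (1 - ‖z‖ ^ 2) ^ (p + lam - 1)) (carleson θ h))
    (n : ℕ) (j : Fin (2 ^ n)) :
    ∫⁻ z in dyadicBox θ h n j, ENNReal.ofReal (u z * (1 - ‖z‖ ^ 2) ^ p) ≤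
      ENNReal.ofReal (π * M ^ 2 * (h / 2 ^ n) ^ (p - lam + 1)) := by
  have hsub : dyadicBox θ h n j ⊆ carleson θ h := dyadicBox_subset_carleson hh.1.le n j
  have hmem : ∀ᵐ z ∂volume.restrict (dyadicBox θ h n j), z ∈ dyadicBox θ h n j :=
    ae_restrict_mem (measurableSet_carleson _ _)
  have hF₀ : ∀ z ∈ dyadicBox θ h n j, 0 ≤ u z * (1 - ‖z‖ ^ 2) ^ p := fun z hz =>
    mul_nonneg (hu₀ z) (Real.rpow_nonneg (one_sub_norm_sq_pos (hsub hz).2.1).le _)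
  have hF : IntegrableOn (fun z => u z * (1 - ‖z‖ ^ 2) ^ p) (dyadicBox θ h n j) :=
    (hG.mono_set hsub).mono' (by fun_prop) <| hmem.mono fun z hz => by
      rw [Real.norm_of_nonneg (hF₀ z hz)]
      exact mul_le_mul_of_nonneg_left
        (one_sub_norm_sq_rpow_le_rpow (hsub hz).2.1 (by linarith)) (hu₀ z)
  rw [← ofReal_integral_eq_lintegral_ofReal hF (hmem.mono hF₀)]
  refine ENNReal.ofReal_le_ofReal ?_
  have hn : h / 2 ^ n ∈ Ioc (0 : ℝ) 1 :=
    ⟨div_pos hh.1 (by positivity), (div_le_self hh.1.le (one_le_pow₀ one_le_two)).trans hh.2⟩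
  have := hM (θ + (2 * (j : ℕ) + 1 - 2 ^ n) * (π * (h / 2 ^ n))) _ hn
  rw [inv_mul_le_iff₀ Real.pi_pos] at this
  exact this.trans_eq (mul_assoc _ _ _).symm

theorem integral_carleson_weight_le (hu₀ : ∀ z, 0 ≤ u z) (hu : Measurable u) (hlam : lam ≤ 1)
    (hp : 1 < p) (hh : h ∈ Ioc (0 : ℝ) 1)
    (hM : ∀ θ : ℝ, ∀ h ∈ Ioc (0 : ℝ) 1,
      π⁻¹ * (∫ z in carleson θ h, u z * (1 - ‖z‖ ^ 2) ^ p) ≤ M ^ 2 * h ^ (p - lam + 1)) :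
    π⁻¹ * (∫ z in carleson θ h, u z * (1 - ‖z‖ ^ 2) ^ (p + lam - 1)) ≤
      2 ^ (1 - lam) * (1 - 2 ^ (1 - p))⁻¹ * M ^ 2 * h ^ p := by
  have hr := two_rpow_one_sub_lt_one hp
  have hC : 0 ≤ 2 ^ (1 - lam) * (1 - (2 : ℝ) ^ (1 - p))⁻¹ :=
    mul_nonneg (by positivity) (inv_nonneg.2 (by linarith))
  have hh₀ := hh.1.le
  by_cases hG : IntegrableOn (fun z => u z * (1 - ‖z‖ ^ 2) ^ (p + lam - 1)) (carleson θ h)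
  swap
  · rw [integral_undef hG, mul_zero]
    positivity
  have hsplit : ∀ z ∈ carleson θ h, ENNReal.ofReal (u z * (1 - ‖z‖ ^ 2) ^ (p + lam - 1)) =
      ENNReal.ofReal ((1 - ‖z‖ ^ 2) ^ (lam - 1)) * ENNReal.ofReal (u z * (1 - ‖z‖ ^ 2) ^ p) :=
    fun z hz => by
      have hpos := one_sub_norm_sq_pos hz.2.1
      rw [← ENNReal.ofReal_mul (by positivity), mul_left_comm, ← Real.rpow_add hpos]
      ring_nf
  have key : ENNReal.ofReal (∫ z in carleson θ h, u z * (1 - ‖z‖ ^ 2) ^ (p + lam - 1)) ≤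
      ENNReal.ofReal (2 ^ (1 - lam) * (1 - 2 ^ (1 - p))⁻¹ * (π * M ^ 2) * h ^ p) := by
    rw [ofReal_integral_eq_lintegral_ofReal hG
        ((ae_restrict_mem (measurableSet_carleson _ _)).mono fun z hz =>
          mul_nonneg (hu₀ z) (Real.rpow_nonneg (one_sub_norm_sq_pos hz.2.1).le _)),
      setLIntegral_congr_fun (measurableSet_carleson _ _) hsplit,
      ← tsum_dyadic_term_eq hp (by positivity) hh.1]
    exact lintegral_carleson_weight_le hlam hh.1 (lintegral_dyadicBox_le hu₀ hu hlam hh hM hG)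
  rw [ENNReal.ofReal_le_ofReal_iff (by positivity)] at key
  rw [inv_mul_le_iff₀ Real.pi_pos]
  linarith

end WeightedCarlesonBound

theorem stmt9_general (lam p : ℝ) (h1 : lam < 1) (hp : 1 < p) :
    ∃ C > 0, ∀ (g : ℂ → ℂ) (M : ℝ), DifferentiableOn ℂ g UD → 0 ≤ M →
      (∀ θ : ℝ, ∀ h ∈ Ioc (0 : ℝ) 1,
        π⁻¹ * (∫ z in carleson θ h,
          ‖deriv g z‖ ^ 2 * (1 - ‖z‖ ^ 2) ^ p) ≤
            M ^ 2 * h ^ (p - lam + 1)) →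
      ∀ θ : ℝ, ∀ h ∈ Ioc (0 : ℝ) 1,
        π⁻¹ * (∫ z in carleson θ h,
          ‖deriv g z‖ ^ 2 * (1 - ‖z‖ ^ 2) ^ (p + lam - 1)) ≤
            C * M ^ 2 * h ^ p := by
  have hr := two_rpow_one_sub_lt_one hp
  exact ⟨2 ^ (1 - lam) * (1 - 2 ^ (1 - p))⁻¹, mul_pos (by positivity) (inv_pos.2 (by linarith)),
    fun g M _ _ hM θ h hh => integral_carleson_weight_le (u := fun z => ‖deriv g z‖ ^ 2)
      (fun _ => by positivity) ((measurable_deriv g).norm.pow_const 2) h1.le hp hh hM⟩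

/-- if M bounds the B L^{p,λ}-seminorm of g, i.e. for every arc,
(1/|I|^{p-λ+1}) ∫_{S(I)} |g'|²(1-|z|²)^p dm ≤ M², then
∫_{S(I)} |g'|²(1-|z|²)^{p+λ-1} dm ≤ C·M²·|I|^p, C depending only on p, λ. -/
theorem stmt9 (lam p : ℝ) (h0 : 0 < lam) (h1 : lam < 1) (hp : 1 < p) :
    ∃ C > 0, ∀ (g : ℂ → ℂ) (M : ℝ), DifferentiableOn ℂ g UD → 0 ≤ M →
      (∀ θ : ℝ, ∀ h ∈ Ioc (0 : ℝ) 1,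
        π⁻¹ * (∫ z in carleson θ h,
          ‖deriv g z‖ ^ 2 * (1 - ‖z‖ ^ 2) ^ p) ≤
            M ^ 2 * h ^ (p - lam + 1)) →
      ∀ θ : ℝ, ∀ h ∈ Ioc (0 : ℝ) 1,
        π⁻¹ * (∫ z in carleson θ h,
          ‖deriv g z‖ ^ 2 * (1 - ‖z‖ ^ 2) ^ (p + lam - 1)) ≤
            C * M ^ 2 * h ^ p :=
  stmt9_general lam p h1 hp
end
end
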